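/- arXiv:0912.0073 — 4 statements merged into one kernel-verified Lean document; each statement's English description precedes it below -/
import Mathlib

section
/- For g = 2s+1 with s a positive integer, the constants Y_m^{(a)} = m(g+m)/(a(g-a)) for a ∈ {1,...,s} and m ≥ 1 (with Y_0^{(a)} = 0) satisfy the constant Y-system: (Y_m^{(a)})^2 = (1+Y_{m-1}^{(a)})(1+Y_{m+1}^{(a)}) / ∏_{d=1}^{s} (1 + 1/Y_m^{(d)})^{I_{ad}}, where I_{ad} = δ_{a,d-1} + δ_{a,d+1} + δ_{a,d}·δ_{a,s}. -/
/-- Incidence-type matrix of the tadpole diagram for `osp(1|2s)`: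
`I_{ad} = δ_{a,d-1} + δ_{a,d+1} + δ_{ad}·δ_{as}` (1-indexed, `a, d ∈ {1,…,s}`). -/
def tadpoleI (s a d : ℕ) : ℕ :=
  (if a + 1 = d then 1 else 0) + (if a = d + 1 then 1 else 0) +
    (if a = d ∧ a = s then 1 else 0)

/-- The constants `Y_m^{(a)} = m(g+m)/(a(g-a))`, `g = 2s+1`, solve the constant
`Y`-system for `osp(1|2s)`. -/
theorem constant_Y_system (s : ℕ) (hs : 1 ≤ s) (Y : ℕ → ℕ → ℚ)
    (hY0 : ∀ a, Y 0 a = 0)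
    (hY : ∀ m a, 1 ≤ m → 1 ≤ a → a ≤ s →
      Y m a = (m * ((2 * s + 1) + m)) / (a * ((2 * s + 1) - a))) :
    ∀ a m, 1 ≤ a → a ≤ s → 1 ≤ m →
      (Y m a) ^ 2 =
        (1 + Y (m - 1) a) * (1 + Y (m + 1) a) /
          ∏ d ∈ Finset.Icc 1 s, (1 + (Y m d)⁻¹) ^ (tadpoleI s a d) := by
  intro a m ha1 has hm1
  obtain ⟨n, rfl⟩ : ∃ n, m = n + 1 := ⟨m - 1, by omega⟩
  obtain ⟨c, rfl⟩ : ∃ c, a = c + 1 := ⟨a - 1, by omega⟩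
  have hsQ : (1:ℚ) ≤ (s:ℚ) := by exact_mod_cast hs
  have haQ : ((c:ℚ) + 1) ≤ (s:ℚ) := by exact_mod_cast has
  have hcQ : (0:ℚ) ≤ (c:ℚ) := Nat.cast_nonneg c
  have hnQ : (0:ℚ) ≤ (n:ℚ) := Nat.cast_nonneg n
  have hA : ((c:ℚ) + 1) ≠ 0 := by positivity
  have hB : 2*(s:ℚ)+1 - ((c:ℚ)+1) ≠ 0 := by nlinarith
  have hM : ((n:ℚ)+1) ≠ 0 := by positivity
  have hQM : 2*(s:ℚ)+1 + ((n:ℚ)+1) ≠ 0 := by positivity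
  -- value of 1 + Y k a for all k
  have hnum : ∀ k : ℕ, 1 + Y k (c+1) =
      ((k:ℚ) + ((c:ℚ)+1)) * (2*(s:ℚ)+1 + (k:ℚ) - ((c:ℚ)+1)) /
        (((c:ℚ)+1) * (2*(s:ℚ)+1 - ((c:ℚ)+1))) := by
    intro k
    rcases Nat.eq_zero_or_pos k with hk | hk
    · subst hk
      rw [hY0]
      rw [eq_comm, div_eq_iff (mul_ne_zero hA hB)]
      push_cast
      ring
    · rw [hY k (c+1) hk (by omega) has]
      push_cast
      rw [add_div' _ _ _ (mul_ne_zero hA hB),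
        div_eq_div_iff (mul_ne_zero hA hB) (mul_ne_zero hA hB)]
      ring
  -- value of 1 + (Y m d)⁻¹ for 1 ≤ d ≤ s
  have hinv : ∀ d : ℕ, 1 ≤ d → d ≤ s → 1 + (Y (n+1) d)⁻¹ =
      (((n:ℚ)+1+(d:ℚ)) * (2*(s:ℚ)+1 + ((n:ℚ)+1) - (d:ℚ))) /
        (((n:ℚ)+1) * (2*(s:ℚ)+1 + ((n:ℚ)+1))) := by
    intro d hd1 hds
    have hdQ : (1:ℚ) ≤ (d:ℚ) := by exact_mod_cast hd1
    have hdsQ : (d:ℚ) ≤ (s:ℚ) := by exact_mod_cast hds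
    have hD : (d:ℚ) ≠ 0 := by positivity
    have hE : 2*(s:ℚ)+1 - (d:ℚ) ≠ 0 := by nlinarith
    rw [hY (n+1) d (by omega) hd1 hds]
    push_cast
    rw [inv_div]
    rw [add_div' _ _ _ (mul_ne_zero hM hQM),
      div_eq_div_iff (mul_ne_zero hM hQM) (mul_ne_zero hM hQM)]
    ring
  -- split the product according to the three summands of tadpoleI
  have hcond : ∀ d : ℕ, (if c + 1 = d + 1 then (1:ℕ) else 0) = (if c = d then 1 else 0) := by
    intro d
    by_cases h : c = d
    · rw [if_pos h, if_pos (by omega)]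
    · rw [if_neg h, if_neg (by omega)]
  have hprod : ∏ d ∈ Finset.Icc 1 s, (1 + (Y (n+1) d)⁻¹) ^ (tadpoleI s (c+1) d)
      = (∏ d ∈ Finset.Icc 1 s, if (c+1) + 1 = d then 1 + (Y (n+1) d)⁻¹ else 1)
      * (∏ d ∈ Finset.Icc 1 s, if c = d then 1 + (Y (n+1) d)⁻¹ else 1)
      * (∏ d ∈ Finset.Icc 1 s, if (c+1) = d ∧ (c+1) = s then 1 + (Y (n+1) d)⁻¹ else 1) := by
    rw [← Finset.prod_mul_distrib, ← Finset.prod_mul_distrib]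
    refine Finset.prod_congr rfl fun d _ => ?_
    simp only [tadpoleI, hcond, pow_add]
    split_ifs <;> simp
  rw [Finset.prod_ite_eq, Finset.prod_ite_eq] at hprod
  have hYv := hY (n+1) (c+1) (by omega) (by omega) has
  push_cast at hYv
  have hm1' : n + 1 - 1 = n := by omega
  rcases eq_or_ne (c+1) s with hcs | hcs
  · -- a = s
    subst hcs
    have h3 : (∏ d ∈ Finset.Icc 1 (c+1),
        if (c+1) = d ∧ (c+1) = (c+1) then 1 + (Y (n+1) d)⁻¹ else 1)
        = 1 + (Y (n+1) (c+1))⁻¹ := by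
      simp only [eq_self_iff_true, and_true]
      rw [Finset.prod_ite_eq, if_pos (Finset.mem_Icc.mpr ⟨by omega, by omega⟩)]
    rw [h3, if_neg (by simp only [Finset.mem_Icc]; omega :
      ¬ ((c+1)+1 ∈ Finset.Icc 1 (c+1)))] at hprod
    have hinv1 := hinv (c+1) (by omega) le_rfl
    push_cast at hinv1
    rcases Nat.eq_zero_or_pos c with hc0 | hc1
    · -- a = s = 1
      subst hc0
      rw [if_neg (by simp only [Finset.mem_Icc]; omega :
        ¬ ((0:ℕ) ∈ Finset.Icc 1 (0+1)))] at hprod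
      rw [hprod, hm1', hnum n, hnum (n+1+1), hinv1, hYv]
      rw [one_mul, one_mul]
      push_cast
      rw [div_pow, div_mul_div_comm, div_div_eq_mul_div,
        div_mul_eq_mul_div, div_div,
        div_eq_div_iff
        (by refine ne_of_gt (pow_pos ?_ 2); repeat' refine mul_pos ?_ ?_
            all_goals linarith)
        (by refine ne_of_gt ?_; repeat' refine mul_pos ?_ ?_
            all_goals linarith)]
      ring
    · -- 1 < a = s
      rw [if_pos (Finset.mem_Icc.mpr ⟨by omega, by omega⟩ : c ∈ Finset.Icc 1 (c+1))] at hprod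
      have hinvc := hinv c hc1 (by omega)
      rw [hprod, hm1', hnum n, hnum (n+1+1), hinvc, hinv1, hYv]
      rw [one_mul]
      push_cast
      have hc1Q : (1:ℚ) ≤ (c:ℚ) := by exact_mod_cast hc1
      rw [div_pow, div_mul_div_comm, div_mul_div_comm, div_div_eq_mul_div,
        div_mul_eq_mul_div, div_div,
        div_eq_div_iff
        (by refine ne_of_gt (pow_pos ?_ 2); repeat' refine mul_pos ?_ ?_
            all_goals linarith)
        (by refine ne_of_gt ?_; repeat' refine mul_pos ?_ ?_
            all_goals linarith)]
      ring
  · -- a < s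
    have h3 : (∏ d ∈ Finset.Icc 1 s,
        if (c+1) = d ∧ (c+1) = s then 1 + (Y (n+1) d)⁻¹ else 1) = 1 :=
      Finset.prod_eq_one fun d _ => if_neg (fun h => hcs h.2)
    rw [h3, if_pos (Finset.mem_Icc.mpr ⟨by omega, by omega⟩ :
      (c+1)+1 ∈ Finset.Icc 1 s)] at hprod
    have hinv2 := hinv ((c+1)+1) (by omega) (by omega)
    push_cast at hinv2
    have hcsQ : ((c:ℚ) + 1) + 1 ≤ (s:ℚ) := by
      have : c + 1 + 1 ≤ s := by omega
      exact_mod_cast this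
    rcases Nat.eq_zero_or_pos c with hc0 | hc1
    · -- a = 1 < s
      subst hc0
      rw [if_neg (by simp only [Finset.mem_Icc]; omega :
        ¬ ((0:ℕ) ∈ Finset.Icc 1 s))] at hprod
      rw [hprod, hm1', hnum n, hnum (n+1+1), hinv2, hYv]
      rw [mul_one, mul_one]
      push_cast
      rw [div_pow, div_mul_div_comm, div_div_eq_mul_div,
        div_mul_eq_mul_div, div_div,
        div_eq_div_iff
        (by refine ne_of_gt (pow_pos ?_ 2); repeat' refine mul_pos ?_ ?_
            all_goals linarith)
        (by refine ne_of_gt ?_; repeat' refine mul_pos ?_ ?_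
            all_goals linarith)]
      ring
    · -- 1 < a < s
      rw [if_pos (Finset.mem_Icc.mpr ⟨by omega, by omega⟩ : c ∈ Finset.Icc 1 s)] at hprod
      have hinvc := hinv c hc1 (by omega)
      rw [hprod, hm1', hnum n, hnum (n+1+1), hinvc, hinv2, hYv]
      rw [mul_one]
      push_cast
      have hc1Q : (1:ℚ) ≤ (c:ℚ) := by exact_mod_cast hc1
      rw [div_pow, div_mul_div_comm, div_mul_div_comm, div_div_eq_mul_div,
        div_mul_eq_mul_div, div_div,
        div_eq_div_iff
        (by refine ne_of_gt (pow_pos ?_ 2); repeat' refine mul_pos ?_ ?_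
            all_goals linarith)
        (by refine ne_of_gt ?_; repeat' refine mul_pos ?_ ?_
            all_goals linarith)]
      ring
end

section
/- The convolution of the kernel K(v) = 1/(2 cosh(πv)) with itself satisfies (K*K)(v) = v/(2 sinh(πv)) for v ≠ 0, and (K*K)(0) = 1/(2π). -/
open Real MeasureTheory Filter Set

lemma sinh_pi_mul_tendsto_atTop : Tendsto (fun w : ℝ => Real.sinh (Real.pi * w)) atTop atTop := by
  apply tendsto_atTop_mono' _ (eventually_atTop.2 ⟨1, fun w hw => ?_⟩)
    (tendsto_id.const_mul_atTop Real.pi_pos)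
  · exact (Real.self_lt_sinh_iff.2 (by positivity)).le

lemma integrableOn_Ioi_sech : IntegrableOn (fun w : ℝ => 1 / (2 * Real.cosh (Real.pi * w))) (Ioi 0) := by
  have hderiv : ∀ x ∈ Ici (0:ℝ), HasDerivAt
      (fun w : ℝ => Real.arctan (Real.sinh (Real.pi * w)) / (2 * Real.pi))
      (1 / (2 * Real.cosh (Real.pi * x))) x := by
    intro x _
    have h1 : HasDerivAt (fun w : ℝ => Real.sinh (Real.pi * w))
        (Real.cosh (Real.pi * x) * (Real.pi * 1)) x :=
      (Real.hasDerivAt_sinh _).comp x ((hasDerivAt_id x).const_mul Real.pi)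
    have h2 := ((Real.hasDerivAt_arctan (Real.sinh (Real.pi * x))).comp x h1).div_const
      (2 * Real.pi)
    refine h2.congr_deriv ?_
    have hc := Real.cosh_pos (Real.pi * x)
    rw [show (1:ℝ) + Real.sinh (Real.pi * x) ^ 2 = Real.cosh (Real.pi * x) ^ 2 from
      (Real.cosh_sq' _).symm]
    field_simp
  exact integrableOn_Ioi_deriv_of_nonneg' (l := Real.pi / 2 / (2 * Real.pi)) hderiv (fun x _ => by positivity) <| ((tendsto_nhds_of_tendsto_nhdsWithin Real.tendsto_arctan_atTop).comp
    sinh_pi_mul_tendsto_atTop).div_const _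

lemma integrable_sech : Integrable (fun w : ℝ => 1 / (2 * Real.cosh (Real.pi * w))) := by
  have heven : ∀ w : ℝ, 1 / (2 * Real.cosh (Real.pi * (-w))) = 1 / (2 * Real.cosh (Real.pi * w)) := by
    intro w; rw [mul_neg, Real.cosh_neg]
  have h1 := integrableOn_Ioi_sech
  have A : MeasurableEmbedding fun x : ℝ => -x :=
    (Homeomorph.neg ℝ).isClosedEmbedding.measurableEmbedding
  have h2 : IntegrableOn (fun w : ℝ => 1 / (2 * Real.cosh (Real.pi * w))) (Iio 0) := by
    have hmap : Measure.map (fun x : ℝ => -x) (volume.restrict (Ioi (0:ℝ)))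
        = volume.restrict (Iio (0:ℝ)) := by
      have := A.restrict_map (μ := (volume : Measure ℝ)) (s := Iio (0:ℝ))
      rw [Measure.map_neg_eq_self (volume : Measure ℝ)] at this
      have hpre : (fun x : ℝ => -x) ⁻¹' Iio 0 = Ioi 0 := by ext x; simp
      rw [this, hpre]
    rw [IntegrableOn, ← hmap, A.integrable_map_iff]
    exact h1.congr_fun (fun x _ => (heven x).symm) measurableSet_Ioi |>.congr
      (ae_of_all _ fun x => rfl)
  have h3 : IntegrableOn (fun w : ℝ => 1 / (2 * Real.cosh (Real.pi * w))) (Iic 0) :=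
    (integrableOn_Iic_iff_integrableOn_Iio).2 h2
  have := h3.union h1
  rwa [Iic_union_Ioi, integrableOn_univ] at this


lemma log_cosh_top (x : ℝ) : Real.log (Real.cosh x)
    = x + Real.log (1 + Real.exp (-(2*x))) - Real.log 2 := by
  have h : Real.cosh x = Real.exp x * (1 + Real.exp (-(2*x))) / 2 := by
    rw [Real.cosh_eq, mul_add, mul_one, ← Real.exp_add]
    ring_nf
  rw [h, Real.log_div (by positivity) two_ne_zero,
    Real.log_mul (Real.exp_ne_zero x) (by positivity), Real.log_exp]

lemma log_cosh_bot (x : ℝ) : Real.log (Real.cosh x)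
    = -x + Real.log (1 + Real.exp (2*x)) - Real.log 2 := by
  have := log_cosh_top (-x)
  rw [Real.cosh_neg] at this
  rw [this]; ring_nf

lemma tendsto_log_one_add_exp_comp {l : Filter ℝ} {f : ℝ → ℝ} (hf : Tendsto f l atBot) :
    Tendsto (fun w => Real.log (1 + Real.exp (f w))) l (nhds 0) := by
  have h1 : Tendsto (fun w => 1 + Real.exp (f w)) l (nhds 1) := by
    simpa using tendsto_const_nhds.add (Real.tendsto_exp_atBot.comp hf)
  simpa [Function.comp_def] using (Real.continuousAt_log one_ne_zero).tendsto.comp h1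


lemma conv_pos (v : ℝ) (hv : 0 < v) :
    ∫ w : ℝ, (1 / (2 * Real.cosh (Real.pi * (v - w)))) * (1 / (2 * Real.cosh (Real.pi * w)))
      = v / (2 * Real.sinh (Real.pi * v)) := by
  set s := Real.sinh (Real.pi * v) with hs_def
  have hs : 0 < s := Real.sinh_pos_iff.2 (by positivity)
  set g : ℝ → ℝ := fun w => Real.tanh (Real.pi * w) - Real.tanh (Real.pi * (w - v)) with hg_def
  have hkey : ∀ w : ℝ, (1 / (2 * Real.cosh (Real.pi * (v - w)))) * (1 / (2 * Real.cosh (Real.pi * w)))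
      = g w / (4 * s) := by
    intro w
    have hc1 := Real.cosh_pos (Real.pi * (v - w))
    have hc2 := Real.cosh_pos (Real.pi * w)
    have hsum : s = Real.sinh (Real.pi * (v - w)) * Real.cosh (Real.pi * w)
        + Real.cosh (Real.pi * (v - w)) * Real.sinh (Real.pi * w) := by
      rw [hs_def, show Real.pi * v = Real.pi * (v - w) + Real.pi * w by ring, Real.sinh_add]
    have hneg : Real.pi * (w - v) = -(Real.pi * (v - w)) := by ring
    rw [hg_def]
    simp only [Real.tanh_eq_sinh_div_cosh, hneg, Real.cosh_neg, Real.sinh_neg]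
    field_simp
    rw [hsum]; ring
  have hF : ∀ w : ℝ, HasDerivAt
      (fun w => (Real.log (Real.cosh (Real.pi * w)) - Real.log (Real.cosh (Real.pi * (w - v)))) / Real.pi)
      (g w) w := by
    intro w
    have h1 : HasDerivAt (fun w : ℝ => Real.log (Real.cosh (Real.pi * w)))
        (Real.sinh (Real.pi * w) * (Real.pi * 1) / Real.cosh (Real.pi * w)) w :=
      (((Real.hasDerivAt_cosh _).comp w ((hasDerivAt_id w).const_mul Real.pi))).log
        (Real.cosh_pos _).ne'
    have h2 : HasDerivAt (fun w : ℝ => Real.log (Real.cosh (Real.pi * (w - v))))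
        (Real.sinh (Real.pi * (w - v)) * (Real.pi * 1) / Real.cosh (Real.pi * (w - v))) w :=
      (((Real.hasDerivAt_cosh _).comp w (((hasDerivAt_id w).sub_const v).const_mul Real.pi))).log
        (Real.cosh_pos _).ne'
    have h3 := (h1.sub h2).div_const Real.pi
    refine h3.congr_deriv ?_
    have hc1 := Real.cosh_pos (Real.pi * w)
    have hc2 := Real.cosh_pos (Real.pi * (w - v))
    rw [hg_def]
    simp only [Real.tanh_eq_sinh_div_cosh]
    field_simp
  have hg_int : Integrable g := by
    have hcont : Continuous g := by
      rw [hg_def]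
      simp only [Real.tanh_eq_sinh_div_cosh]
      apply Continuous.sub
      · exact (Real.continuous_sinh.comp (continuous_const.mul continuous_id)).div
          (Real.continuous_cosh.comp (continuous_const.mul continuous_id))
          (fun x => (Real.cosh_pos _).ne')
      · exact (Real.continuous_sinh.comp (continuous_const.mul (continuous_id.sub continuous_const))).div
          (Real.continuous_cosh.comp (continuous_const.mul (continuous_id.sub continuous_const)))
          (fun x => (Real.cosh_pos _).ne')
    refine (integrable_sech.const_mul (2 * s)).mono' hcont.aestronglyMeasurable
      (ae_of_all _ fun w => ?_)
    have h1 : g w = (4 * s) * ((1 / (2 * Real.cosh (Real.pi * (v - w)))) * (1 / (2 * Real.cosh (Real.pi * w)))) := by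
      rw [hkey w]; field_simp
    rw [Real.norm_eq_abs, h1, abs_of_nonneg (by positivity)]
    have hb : (1 : ℝ) / (2 * Real.cosh (Real.pi * (v - w))) ≤ 1 / 2 :=
      one_div_le_one_div_of_le two_pos (by linarith [Real.one_le_cosh (Real.pi * (v - w))])
    calc (4 * s) * ((1 / (2 * Real.cosh (Real.pi * (v - w)))) * (1 / (2 * Real.cosh (Real.pi * w))))
        ≤ (4 * s) * ((1 / 2) * (1 / (2 * Real.cosh (Real.pi * w)))) := by
          have hc2 := Real.cosh_pos (Real.pi * w)
          gcongr
      _ = 2 * s * (1 / (2 * Real.cosh (Real.pi * w))) := by ring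
  have htop : Tendsto
      (fun w => (Real.log (Real.cosh (Real.pi * w)) - Real.log (Real.cosh (Real.pi * (w - v)))) / Real.pi)
      atTop (nhds v) := by
    have hEq : ∀ w : ℝ, (Real.log (Real.cosh (Real.pi * w)) - Real.log (Real.cosh (Real.pi * (w - v)))) / Real.pi
        = v + (Real.log (1 + Real.exp (-(2 * (Real.pi * w))))
            - Real.log (1 + Real.exp (-(2 * (Real.pi * (w - v)))))) / Real.pi := by
      intro w
      rw [log_cosh_top (Real.pi * w), log_cosh_top (Real.pi * (w - v))]
      field_simp
      ring
    have idTop : Tendsto (fun w : ℝ => w) atTop atTop := tendsto_id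
    have T1 : Tendsto (fun w : ℝ => -(2 * (Real.pi * w))) atTop atBot := by
      apply Filter.tendsto_neg_atTop_atBot.comp
      exact ((idTop.const_mul_atTop (by positivity : (0:ℝ) < 2 * Real.pi)).congr
        (fun w => by ring))
    have T2 : Tendsto (fun w : ℝ => -(2 * (Real.pi * (w - v)))) atTop atBot := by
      apply Filter.tendsto_neg_atTop_atBot.comp
      have hsub : Tendsto (fun w : ℝ => w - v) atTop atTop :=
        (tendsto_atTop_add_const_right atTop (-v) idTop).congr
          (fun w => (sub_eq_add_neg w v).symm)
      exact ((hsub.const_mul_atTop (by positivity : (0:ℝ) < 2 * Real.pi)).congr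
        (fun w => by ring))
    have := (tendsto_const_nhds (α := ℝ) (x := v)).add
      (((tendsto_log_one_add_exp_comp T1).sub (tendsto_log_one_add_exp_comp T2)).div_const Real.pi)
    simp only [sub_zero, zero_sub, zero_div, add_zero, sub_self] at this
    exact (this.congr (fun w => (hEq w).symm))
  have hbot : Tendsto
      (fun w => (Real.log (Real.cosh (Real.pi * w)) - Real.log (Real.cosh (Real.pi * (w - v)))) / Real.pi)
      atBot (nhds (-v)) := by
    have hEq : ∀ w : ℝ, (Real.log (Real.cosh (Real.pi * w)) - Real.log (Real.cosh (Real.pi * (w - v)))) / Real.pi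
        = -v + (Real.log (1 + Real.exp (2 * (Real.pi * w)))
            - Real.log (1 + Real.exp (2 * (Real.pi * (w - v))))) / Real.pi := by
      intro w
      rw [log_cosh_bot (Real.pi * w), log_cosh_bot (Real.pi * (w - v))]
      field_simp
      ring
    have idBot : Tendsto (fun w : ℝ => w) atBot atBot := tendsto_id
    have T1 : Tendsto (fun w : ℝ => 2 * (Real.pi * w)) atBot atBot :=
      (idBot.const_mul_atBot (by positivity : (0:ℝ) < 2 * Real.pi)).congr
        (fun w => by ring)
    have T2 : Tendsto (fun w : ℝ => 2 * (Real.pi * (w - v))) atBot atBot := by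
      have hsub : Tendsto (fun w : ℝ => w - v) atBot atBot :=
        (tendsto_atBot_add_const_right atBot (-v) idBot).congr
          (fun w => (sub_eq_add_neg w v).symm)
      exact (hsub.const_mul_atBot (by positivity : (0:ℝ) < 2 * Real.pi)).congr
        (fun w => by ring)
    have := (tendsto_const_nhds (α := ℝ) (x := -v)).add
      (((tendsto_log_one_add_exp_comp T1).sub (tendsto_log_one_add_exp_comp T2)).div_const Real.pi)
    simp only [sub_zero, zero_sub, zero_div, add_zero, sub_self] at this
    exact (this.congr (fun w => (hEq w).symm))
  have hI := integral_of_hasDerivAt_of_tendsto hF hg_int hbot htop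
  simp only [hkey]
  rw [integral_div, hI, sub_neg_eq_add]
  field_simp
  ring



lemma sinh_div_cosh_top (x : ℝ) : Real.sinh x / Real.cosh x
    = (1 - Real.exp (-(2*x))) / (1 + Real.exp (-(2*x))) := by
  rw [Real.sinh_eq, Real.cosh_eq]
  have h1 : Real.exp (-x) = Real.exp x * Real.exp (-(2*x)) := by
    rw [← Real.exp_add]; ring_nf
  rw [h1]
  have h2 := Real.exp_ne_zero x
  have h3 : (0:ℝ) < 1 + Real.exp (-(2*x)) := by positivity
  field_simp

lemma sinh_div_cosh_bot (x : ℝ) : Real.sinh x / Real.cosh x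
    = (Real.exp (2*x) - 1) / (Real.exp (2*x) + 1) := by
  rw [Real.sinh_eq, Real.cosh_eq]
  have h1 : Real.exp x = Real.exp (-x) * Real.exp (2*x) := by
    rw [← Real.exp_add]; ring_nf
  rw [h1]
  have h2 := Real.exp_ne_zero (-x)
  have h3 : (0:ℝ) < Real.exp (2*x) + 1 := by positivity
  field_simp

lemma conv_zero :
    ∫ w : ℝ, (1 / (2 * Real.cosh (Real.pi * (0 - w)))) * (1 / (2 * Real.cosh (Real.pi * w)))
      = 1 / (2 * Real.pi) := by
  have hF : ∀ w : ℝ, HasDerivAt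
      (fun w => Real.sinh (Real.pi * w) / Real.cosh (Real.pi * w) / (4 * Real.pi))
      ((1 / (2 * Real.cosh (Real.pi * (0 - w)))) * (1 / (2 * Real.cosh (Real.pi * w)))) w := by
    intro w
    have hs : HasDerivAt (fun w : ℝ => Real.sinh (Real.pi * w))
        (Real.cosh (Real.pi * w) * (Real.pi * 1)) w :=
      (Real.hasDerivAt_sinh _).comp w ((hasDerivAt_id w).const_mul Real.pi)
    have hc : HasDerivAt (fun w : ℝ => Real.cosh (Real.pi * w))
        (Real.sinh (Real.pi * w) * (Real.pi * 1)) w :=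
      (Real.hasDerivAt_cosh _).comp w ((hasDerivAt_id w).const_mul Real.pi)
    have h := (hs.div hc (Real.cosh_pos _).ne').div_const (4 * Real.pi)
    refine h.congr_deriv ?_
    have hcp := Real.cosh_pos (Real.pi * w)
    have hid := Real.cosh_sq_sub_sinh_sq (Real.pi * w)
    rw [show Real.pi * (0 - w) = -(Real.pi * w) by ring, Real.cosh_neg]
    have hnum : Real.cosh (Real.pi * w) * (Real.pi * 1) * Real.cosh (Real.pi * w)
        - Real.sinh (Real.pi * w) * (Real.sinh (Real.pi * w) * (Real.pi * 1)) = Real.pi := by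
      linear_combination Real.pi * hid
    rw [div_div, hnum]
    have hpi := Real.pi_ne_zero
    field_simp
    ring
  have hint : Integrable (fun w : ℝ =>
      (1 / (2 * Real.cosh (Real.pi * (0 - w)))) * (1 / (2 * Real.cosh (Real.pi * w)))) := by
    have hcont : Continuous (fun w : ℝ =>
        (1 / (2 * Real.cosh (Real.pi * (0 - w)))) * (1 / (2 * Real.cosh (Real.pi * w)))) := by
      apply Continuous.mul
      · exact continuous_const.div
          (continuous_const.mul (Real.continuous_cosh.comp
            (continuous_const.mul (continuous_const.sub continuous_id))))
          (fun x => by positivity)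
      · exact continuous_const.div
          (continuous_const.mul (Real.continuous_cosh.comp
            (continuous_const.mul continuous_id)))
          (fun x => by positivity)
    refine (integrable_sech.const_mul (1/2)).mono' hcont.aestronglyMeasurable
      (ae_of_all _ fun w => ?_)
    rw [Real.norm_eq_abs, abs_of_nonneg (by positivity)]
    have hb : (1 : ℝ) / (2 * Real.cosh (Real.pi * (0 - w))) ≤ 1 / 2 :=
      one_div_le_one_div_of_le two_pos (by linarith [Real.one_le_cosh (Real.pi * (0 - w))])
    have hc2 := Real.cosh_pos (Real.pi * w)
    calc (1 / (2 * Real.cosh (Real.pi * (0 - w)))) * (1 / (2 * Real.cosh (Real.pi * w)))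
        ≤ (1 / 2) * (1 / (2 * Real.cosh (Real.pi * w))) := by gcongr
      _ = 1 / 2 * (1 / (2 * Real.cosh (Real.pi * w))) := by ring
  have idTop : Tendsto (fun w : ℝ => w) atTop atTop := tendsto_id
  have idBot : Tendsto (fun w : ℝ => w) atBot atBot := tendsto_id
  have Ttop : Tendsto (fun w : ℝ => Real.exp (-(2 * (Real.pi * w)))) atTop (nhds 0) := by
    apply Real.tendsto_exp_atBot.comp
    apply Filter.tendsto_neg_atTop_atBot.comp
    exact (idTop.const_mul_atTop (by positivity : (0:ℝ) < 2 * Real.pi)).congr (fun w => by ring)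
  have Tbot : Tendsto (fun w : ℝ => Real.exp (2 * (Real.pi * w))) atBot (nhds 0) := by
    apply Real.tendsto_exp_atBot.comp
    exact (idBot.const_mul_atBot (by positivity : (0:ℝ) < 2 * Real.pi)).congr (fun w => by ring)
  have htop : Tendsto (fun w => Real.sinh (Real.pi * w) / Real.cosh (Real.pi * w) / (4 * Real.pi))
      atTop (nhds (1 / (4 * Real.pi))) := by
    have h1 : Tendsto (fun w : ℝ => (1 - Real.exp (-(2 * (Real.pi * w))))
        / (1 + Real.exp (-(2 * (Real.pi * w))))) atTop (nhds 1) := by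
      have := (tendsto_const_nhds (x := (1:ℝ)).sub Ttop).div
        ((tendsto_const_nhds (x := (1:ℝ))).add Ttop) (by norm_num)
      simpa [Pi.div_def] using this
    have := h1.div_const (4 * Real.pi)
    exact this.congr (fun w => by rw [sinh_div_cosh_top])
  have hbot : Tendsto (fun w => Real.sinh (Real.pi * w) / Real.cosh (Real.pi * w) / (4 * Real.pi))
      atBot (nhds (-(1 / (4 * Real.pi)))) := by
    have h1 : Tendsto (fun w : ℝ => (Real.exp (2 * (Real.pi * w)) - 1)
        / (Real.exp (2 * (Real.pi * w)) + 1)) atBot (nhds (-1)) := by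
      have := (Tbot.sub (tendsto_const_nhds (x := (1:ℝ)))).div
        (Tbot.add (tendsto_const_nhds (x := (1:ℝ)))) (by norm_num)
      simpa [Pi.div_def] using this
    have := h1.div_const (4 * Real.pi)
    rw [show (-1 : ℝ) / (4 * Real.pi) = -(1 / (4 * Real.pi)) by ring] at this
    exact this.congr (fun w => by rw [sinh_div_cosh_bot])
  rw [integral_of_hasDerivAt_of_tendsto hF hint hbot htop, sub_neg_eq_add]
  have := Real.pi_ne_zero
  field_simp
  ring


/-- The self-convolution of `K(v) = 1/(2 cosh(πv))` equals `v/(2 sinh(πv))`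
for `v ≠ 0`, and `1/(2π)` at `v = 0`. -/
theorem kernel_self_convolution
    (K : ℝ → ℝ) (hK : ∀ v, K v = 1 / (2 * Real.cosh (Real.pi * v))) :
    (∀ v : ℝ, v ≠ 0 →
        ∫ w : ℝ, K (v - w) * K w = v / (2 * Real.sinh (Real.pi * v))) ∧
      (∫ w : ℝ, K (0 - w) * K w) = 1 / (2 * Real.pi) := by
  constructor
  · intro v hv
    simp only [hK]
    rcases hv.lt_or_gt with h | h
    · have h0 := conv_pos (-v) (by linarith)
      have hsym : ∫ w : ℝ, (1 / (2 * Real.cosh (Real.pi * (v - w)))) * (1 / (2 * Real.cosh (Real.pi * w)))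
          = ∫ w : ℝ, (1 / (2 * Real.cosh (Real.pi * (-v - w)))) * (1 / (2 * Real.cosh (Real.pi * w))) := by
        rw [← integral_neg_eq_self (fun w : ℝ =>
          (1 / (2 * Real.cosh (Real.pi * (v - w)))) * (1 / (2 * Real.cosh (Real.pi * w))))]
        congr 1
        ext w
        rw [show Real.pi * (v - -w) = -(Real.pi * (-v - w)) by ring,
          show Real.pi * -w = -(Real.pi * w) by ring, Real.cosh_neg, Real.cosh_neg]
      rw [hsym, h0, show Real.pi * -v = -(Real.pi * v) by ring, Real.sinh_neg]
      rw [mul_neg, div_neg, neg_div, neg_neg]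
    · exact conv_pos v h
  · simp only [hK]
    exact conv_zero
end

section
/- For real v and real constant c, lim_{N→∞} (N/2) · log[ tanh(π/2 · (v + i(1/2 + c/N))) · tanh(π/2 · (v − i(1/2 + c/N))) ] = πc / cosh(πv). -/
open Complex Filter

private lemma tanh_hasDerivAt' (z : ℂ) (h : Complex.cosh z ≠ 0) :
    HasDerivAt Complex.tanh (1 / Complex.cosh z ^ 2) z := by
  have h' := (Complex.hasDerivAt_sinh z).div (Complex.hasDerivAt_cosh z) h
  have hfun : Complex.tanh = fun z => Complex.sinh z / Complex.cosh z :=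
    funext Complex.tanh_eq_sinh_div_cosh
  rw [hfun]
  refine h'.congr_deriv ?_
  have h2 := Complex.cosh_sq_sub_sinh_sq z
  rw [show Complex.cosh z * Complex.cosh z - Complex.sinh z * Complex.sinh z = 1 by
    rw [← sq, ← sq]; exact h2]

private lemma cosh_ofReal_add_ofReal_mul_I (x y : ℝ) :
    Complex.cosh ((x : ℂ) + (y : ℂ) * I) =
      ((Real.cosh x * Real.cos y : ℝ) : ℂ) + ((Real.sinh x * Real.sin y : ℝ) : ℂ) * I := by
  rw [Complex.cosh_add, Complex.cosh_mul_I, Complex.sinh_mul_I]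
  push_cast [Complex.ofReal_cosh, Complex.ofReal_sinh, Complex.ofReal_cos, Complex.ofReal_sin]
  ring

private lemma sinh_ofReal_add_ofReal_mul_I (x y : ℝ) :
    Complex.sinh ((x : ℂ) + (y : ℂ) * I) =
      ((Real.sinh x * Real.cos y : ℝ) : ℂ) + ((Real.cosh x * Real.sin y : ℝ) : ℂ) * I := by
  rw [Complex.sinh_add, Complex.cosh_mul_I, Complex.sinh_mul_I]
  push_cast [Complex.ofReal_cosh, Complex.ofReal_sinh, Complex.ofReal_cos, Complex.ofReal_sin]
  ring

/-- For fixed real `v` and real constant `c`,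
`(N/2)·log[tanh(π/2(v + i(1/2 + c/N)))·tanh(π/2(v − i(1/2 + c/N)))] → πc/cosh(πv)`
as `N → ∞`. -/
theorem trotter_limit_driving_term (v c : ℝ) :
    Tendsto
      (fun N : ℕ =>
        ((N : ℂ) / 2) *
          Complex.log
            (Complex.tanh (↑Real.pi / 2 * (↑v + I * (1 / 2 + (c : ℂ) / N))) *
              Complex.tanh (↑Real.pi / 2 * (↑v - I * (1 / 2 + (c : ℂ) / N)))))
      atTop
      (nhds ((Real.pi * c / Real.cosh (Real.pi * v) : ℝ) : ℂ)) := by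
  set F : ℂ → ℂ := fun w =>
    Complex.log
      (Complex.tanh (↑Real.pi / 2 * (↑v + I * (1 / 2 + w))) *
        Complex.tanh (↑Real.pi / 2 * (↑v - I * (1 / 2 + w)))) with hF
  set z1 : ℂ := ((Real.pi * v / 2 : ℝ) : ℂ) + ((Real.pi / 4 : ℝ) : ℂ) * I with hz1
  set z2 : ℂ := ((Real.pi * v / 2 : ℝ) : ℂ) + ((-(Real.pi / 4) : ℝ) : ℂ) * I with hz2
  have hπ : (0 : ℝ) < Real.pi := Real.pi_pos
  have hcos4 : (0 : ℝ) < Real.cos (Real.pi / 4) := by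
    rw [Real.cos_pi_div_four]; positivity
  have hsin4 : (0 : ℝ) < Real.sin (Real.pi / 4) := by
    rw [Real.sin_pi_div_four]; positivity
  -- nonvanishing
  have hc1 : Complex.cosh z1 ≠ 0 := by
    rw [hz1, cosh_ofReal_add_ofReal_mul_I]
    intro h
    rw [Complex.ext_iff] at h
    simp only [Complex.add_re, Complex.ofReal_re, Complex.mul_I_re, Complex.ofReal_im,
      Complex.zero_re, neg_zero, add_zero] at h
    have := mul_pos (Real.cosh_pos (Real.pi * v / 2)) hcos4
    linarith [h.1]
  have hc2 : Complex.cosh z2 ≠ 0 := by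
    rw [hz2, cosh_ofReal_add_ofReal_mul_I]
    intro h
    rw [Complex.ext_iff] at h
    simp only [Complex.add_re, Complex.ofReal_re, Complex.mul_I_re, Complex.ofReal_im,
      Complex.zero_re, neg_zero, add_zero] at h
    rw [Real.cos_neg] at h
    have := mul_pos (Real.cosh_pos (Real.pi * v / 2)) hcos4
    linarith [h.1]
  have hs1 : Complex.sinh z1 ≠ 0 := by
    rw [hz1, sinh_ofReal_add_ofReal_mul_I]
    intro h
    rw [Complex.ext_iff] at h
    simp only [Complex.add_im, Complex.ofReal_im, Complex.mul_I_im, Complex.ofReal_re,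
      Complex.zero_im, zero_add] at h
    have := mul_pos (Real.cosh_pos (Real.pi * v / 2)) hsin4
    linarith [h.2]
  have hs2 : Complex.sinh z2 ≠ 0 := by
    rw [hz2, sinh_ofReal_add_ofReal_mul_I]
    intro h
    rw [Complex.ext_iff] at h
    simp only [Complex.add_im, Complex.ofReal_im, Complex.mul_I_im, Complex.ofReal_re,
      Complex.zero_im, zero_add] at h
    rw [Real.sin_neg] at h
    have := mul_pos (Real.cosh_pos (Real.pi * v / 2)) hsin4
    have h2 := h.2
    rw [mul_neg] at h2
    linarith
  -- key algebraic identities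
  have hsub : z1 - z2 = ((Real.pi / 2 : ℝ) : ℂ) * I := by
    rw [hz1, hz2]; push_cast; ring
  have hadd : z1 + z2 = ((Real.pi * v : ℝ) : ℂ) := by
    rw [hz1, hz2]; push_cast; ring
  have E1 : Complex.cosh z1 * Complex.cosh z2 = Complex.sinh z1 * Complex.sinh z2 := by
    have := Complex.cosh_sub z1 z2
    rw [hsub, Complex.cosh_mul_I, ← Complex.ofReal_cos, Real.cos_pi_div_two] at this
    have h0 : Complex.cosh z1 * Complex.cosh z2 - Complex.sinh z1 * Complex.sinh z2 = 0 := by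
      rw [← this]; simp
    linear_combination h0
  have E2 : Complex.sinh z2 * Complex.cosh z1 - Complex.cosh z2 * Complex.sinh z1 = -I := by
    have := Complex.sinh_sub z2 z1
    have hsub' : z2 - z1 = ((-(Real.pi / 2) : ℝ) : ℂ) * I := by
      rw [hz1, hz2]; push_cast; ring
    rw [hsub', Complex.sinh_mul_I, ← Complex.ofReal_sin, Real.sin_neg, Real.sin_pi_div_two] at this
    rw [← this]; push_cast; ring
  have E3 : Complex.cosh ((Real.pi * v : ℝ) : ℂ) =
      Complex.cosh z1 * Complex.cosh z2 + Complex.sinh z1 * Complex.sinh z2 := by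
    rw [← hadd, Complex.cosh_add]
  have E41 := Complex.cosh_sq_sub_sinh_sq z1
  have E42 := Complex.cosh_sq_sub_sinh_sq z2
  have hchv : Complex.cosh ((Real.pi * v : ℝ) : ℂ) ≠ 0 := by
    rw [← Complex.ofReal_cosh]
    exact_mod_cast (Real.cosh_pos (Real.pi * v)).ne'
  -- tanh product = 1
  have hprod : Complex.tanh z1 * Complex.tanh z2 = 1 := by
    rw [Complex.tanh_eq_sinh_div_cosh, Complex.tanh_eq_sinh_div_cosh]
    field_simp
    linear_combination -E1
  -- arguments at w = 0
  have hA0 : (↑Real.pi / 2 * (↑v + I * (1 / 2 + (0 : ℂ))) : ℂ) = z1 := by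
    rw [hz1]; push_cast; ring
  have hB0 : (↑Real.pi / 2 * (↑v - I * (1 / 2 + (0 : ℂ))) : ℂ) = z2 := by
    rw [hz2]; push_cast; ring
  -- derivatives of the inner affine maps
  have hA : HasDerivAt (fun w : ℂ => ↑Real.pi / 2 * (↑v + I * (1 / 2 + w)))
      (↑Real.pi / 2 * (I * 1)) 0 :=
    ((((hasDerivAt_id (0 : ℂ)).const_add (1 / 2)).const_mul I).const_add (v : ℂ)).const_mul _
  have hB : HasDerivAt (fun w : ℂ => ↑Real.pi / 2 * (↑v - I * (1 / 2 + w)))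
      (↑Real.pi / 2 * (-(I * 1))) 0 :=
    ((((hasDerivAt_id (0 : ℂ)).const_add (1 / 2)).const_mul I).const_sub (v : ℂ)).const_mul _
  -- derivatives of the tanh factors
  have ht1 : HasDerivAt (fun w : ℂ => Complex.tanh (↑Real.pi / 2 * (↑v + I * (1 / 2 + w))))
      (1 / Complex.cosh z1 ^ 2 * (↑Real.pi / 2 * (I * 1))) 0 := by
    have hg : HasDerivAt Complex.tanh (1 / Complex.cosh z1 ^ 2)
        ((fun w : ℂ => ↑Real.pi / 2 * (↑v + I * (1 / 2 + w))) 0) := by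
      simp only []
      rw [hA0]
      exact tanh_hasDerivAt' z1 hc1
    exact hg.comp 0 hA
  have ht2 : HasDerivAt (fun w : ℂ => Complex.tanh (↑Real.pi / 2 * (↑v - I * (1 / 2 + w))))
      (1 / Complex.cosh z2 ^ 2 * (↑Real.pi / 2 * (-(I * 1)))) 0 := by
    have hg : HasDerivAt Complex.tanh (1 / Complex.cosh z2 ^ 2)
        ((fun w : ℂ => ↑Real.pi / 2 * (↑v - I * (1 / 2 + w))) 0) := by
      simp only []
      rw [hB0]
      exact tanh_hasDerivAt' z2 hc2
    exact hg.comp 0 hB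
  -- derivative of the product
  have hG := ht1.mul ht2
  -- value of the product at 0 is 1
  have hG0 : (Complex.tanh (↑Real.pi / 2 * (↑v + I * (1 / 2 + (0:ℂ)))) *
      Complex.tanh (↑Real.pi / 2 * (↑v - I * (1 / 2 + (0:ℂ))))) = 1 := by
    rw [hA0, hB0]; exact hprod
  -- derivative of F at 0
  set D : ℂ := ↑Real.pi * 2 / Complex.cosh ((Real.pi * v : ℝ) : ℂ) with hD
  have hFderiv : HasDerivAt F D 0 := by
    have hlog : HasDerivAt Complex.log
        ((Complex.tanh (↑Real.pi / 2 * (↑v + I * (1 / 2 + (0:ℂ)))) *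
          Complex.tanh (↑Real.pi / 2 * (↑v - I * (1 / 2 + (0:ℂ)))))⁻¹)
        ((fun w : ℂ => Complex.tanh (↑Real.pi / 2 * (↑v + I * (1 / 2 + w))) *
          Complex.tanh (↑Real.pi / 2 * (↑v - I * (1 / 2 + w)))) 0) := by
      simp only []
      apply Complex.hasDerivAt_log
      rw [hG0]
      exact Complex.one_mem_slitPlane
    have hcomp := hlog.comp 0 hG
    have hval : (Complex.tanh (↑Real.pi / 2 * (↑v + I * (1 / 2 + (0:ℂ)))) *
          Complex.tanh (↑Real.pi / 2 * (↑v - I * (1 / 2 + (0:ℂ)))))⁻¹ *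
        (1 / Complex.cosh z1 ^ 2 * (↑Real.pi / 2 * (I * 1)) *
            Complex.tanh (↑Real.pi / 2 * (↑v - I * (1 / 2 + (0:ℂ)))) +
          Complex.tanh (↑Real.pi / 2 * (↑v + I * (1 / 2 + (0:ℂ)))) *
            (1 / Complex.cosh z2 ^ 2 * (↑Real.pi / 2 * (-(I * 1))))) = D := by
      have hP : Complex.cosh z1 * Complex.cosh z2 + Complex.sinh z1 * Complex.sinh z2 ≠ 0 := by
        rw [← E3]; exact hchv
      have key : Complex.sinh z2 * Complex.cosh z2 - Complex.sinh z1 * Complex.cosh z1 =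
          -I * (Complex.cosh z1 * Complex.cosh z2 + Complex.sinh z1 * Complex.sinh z2) := by
        linear_combination (Complex.cosh z1 * Complex.cosh z2 +
            Complex.sinh z1 * Complex.sinh z2) * E2
          - Complex.sinh z2 * Complex.cosh z2 * E41 + Complex.sinh z1 * Complex.cosh z1 * E42
      rw [hA0, hB0, hprod, hD, Complex.tanh_eq_sinh_div_cosh, Complex.tanh_eq_sinh_div_cosh]
      rw [E3, inv_one, one_mul]
      have hP2 : Complex.cosh z1 * Complex.cosh z2 + Complex.sinh z1 * Complex.sinh z2 =
          2 * Complex.cosh z1 * Complex.cosh z2 := by linear_combination -E1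
      have key2 : Complex.sinh z2 * Complex.cosh z2 - Complex.sinh z1 * Complex.cosh z1 =
          -2 * I * Complex.cosh z1 * Complex.cosh z2 := by linear_combination key - I * hP2
      rw [eq_div_iff hP, hP2]
      field_simp
      linear_combination I * key2 -
        2 * Complex.cosh z1 * Complex.cosh z2 * Complex.I_sq
    rw [← hval]
    exact hcomp
  -- value of F at 0 is 0
  have hF0 : F 0 = 0 := by
    rw [hF]
    simp only []
    rw [hG0, Complex.log_one]
  -- final limit value as a complex number
  have hchv' : Complex.cosh ((Real.pi : ℂ) * (v : ℂ)) ≠ 0 := by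
    rw [show ((Real.pi : ℂ) * (v : ℂ)) = ((Real.pi * v : ℝ) : ℂ) by push_cast; ring]
    exact hchv
  have hTarget : ((Real.pi * c / Real.cosh (Real.pi * v) : ℝ) : ℂ) = (c : ℂ) / 2 * D := by
    rw [hD]
    push_cast
    field_simp [hchv']
  by_cases hc : c = 0
  · subst hc
    have : ∀ N : ℕ, ((N : ℂ) / 2) *
        Complex.log
          (Complex.tanh (↑Real.pi / 2 * (↑v + I * (1 / 2 + ((0:ℝ) : ℂ) / N))) *
            Complex.tanh (↑Real.pi / 2 * (↑v - I * (1 / 2 + ((0:ℝ) : ℂ) / N)))) = 0 := by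
      intro N
      have h0 : ((0:ℝ) : ℂ) / N = (0 : ℂ) := by simp
      rw [h0, hG0, Complex.log_one, mul_zero]
    rw [show (fun N : ℕ =>
        ((N : ℂ) / 2) *
          Complex.log
            (Complex.tanh (↑Real.pi / 2 * (↑v + I * (1 / 2 + ((0:ℝ) : ℂ) / N))) *
              Complex.tanh (↑Real.pi / 2 * (↑v - I * (1 / 2 + ((0:ℝ) : ℂ) / N))))) =
        fun _ : ℕ => (0 : ℂ) from funext this]
    simp
  · -- c ≠ 0
    have hslope : Tendsto (slope F 0) (nhdsWithin 0 {(0:ℂ)}ᶜ) (nhds D) :=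
      hasDerivAt_iff_tendsto_slope.mp hFderiv
    have hcn : Tendsto (fun N : ℕ => (c : ℂ) / N) atTop (nhdsWithin 0 {(0:ℂ)}ᶜ) := by
      apply tendsto_nhdsWithin_of_tendsto_nhds_of_eventually_within
      · have hre : Tendsto (fun N : ℕ => (c / N : ℝ)) atTop (nhds 0) :=
          tendsto_const_div_atTop_nhds_zero_nat c
        have h2 := (Complex.continuous_ofReal.tendsto 0).comp hre
        simp only [Function.comp_def, Complex.ofReal_div, Complex.ofReal_natCast,
          Complex.ofReal_zero] at h2
        exact h2
      · filter_upwards [eventually_ge_atTop 1] with N hN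
        have hN0 : (N : ℂ) ≠ 0 := by
          exact_mod_cast Nat.cast_ne_zero.mpr (by omega)
        simp only [Set.mem_compl_iff, Set.mem_singleton_iff]
        exact div_ne_zero (by exact_mod_cast hc) hN0
    have hmain : Tendsto (fun N : ℕ => (c : ℂ) / 2 * slope F 0 ((c : ℂ) / N)) atTop
        (nhds ((c : ℂ) / 2 * D)) :=
      Tendsto.const_mul _ (hslope.comp hcn)
    rw [hTarget]
    apply hmain.congr'
    filter_upwards [eventually_ge_atTop 1] with N hN
    have hN0 : (N : ℂ) ≠ 0 := by
      exact_mod_cast Nat.cast_ne_zero.mpr (by omega)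
    have hcc : (c : ℂ) ≠ 0 := by exact_mod_cast hc
    rw [slope_def_field, hF0]
    rw [hF]
    simp only []
    field_simp
    rw [sub_zero, mul_zero, sub_zero, mul_div_cancel_left₀ _ hcc]
end

section
/- (Desnanot–Jacobi / Dodgson condensation) For an n × n matrix M with n ≥ 2 over a commutative ring, det(M) · det(M with first and last rows and first and last columns removed) = det(M with first row and first column removed) · det(M with last row and last column removed) − det(M with first row and last column removed) · det(M with last row and first column removed). -/
open Matrix

private noncomputable def cornerEquiv (n : ℕ) : Fin 2 ⊕ Fin n ≃ Fin (n + 2) :=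
  Equiv.ofBijective
    (Sum.elim ![0, Fin.last (n + 1)] fun i : Fin n => ((i.succ : Fin (n + 1)).castSucc))
    (by
      rw [Fintype.bijective_iff_injective_and_card]
      refine ⟨?_, by simp [add_comm]⟩
      rintro (a | a) (b | b) h
      · fin_cases a <;> fin_cases b <;> simp_all [Fin.ext_iff] <;> try omega
      · fin_cases a <;> simp_all [Fin.ext_iff] <;> try omega
      · fin_cases b <;> simp_all [Fin.ext_iff] <;> try omega
      · simp_all [Fin.ext_iff] <;> omega)

private theorem dj_key {R : Type*} [CommRing R] {n : ℕ}
    (M : Matrix (Fin (n + 2)) (Fin (n + 2)) R) :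
    M.det *
        ((M.submatrix Fin.succ Fin.succ).det *
            (M.submatrix Fin.castSucc Fin.castSucc).det -
          (M.submatrix Fin.succ Fin.castSucc).det *
            (M.submatrix Fin.castSucc Fin.succ).det) =
      M.det * (M.det *
        (M.submatrix (fun i : Fin n => (i.succ : Fin (n + 1)).castSucc)
          (fun j : Fin n => (j.succ : Fin (n + 1)).castSucc)).det) := by
  set l : Fin (n + 2) := Fin.last (n + 1) with hl
  set mid : Fin n → Fin (n + 2) := fun i => ((i.succ : Fin (n + 1)).castSucc) with hmid
  have hmid0 : ∀ i : Fin n, mid i ≠ 0 := by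
    intro i; simp [hmid, Fin.ext_iff]
  have hmidl : ∀ i : Fin n, mid i ≠ l := by
    intro i; simp [hmid, hl, Fin.ext_iff]; omega
  have h0l : (0 : Fin (n + 2)) ≠ l := by
    simp [hl, Fin.ext_iff]
  have hl0 : l ≠ (0 : Fin (n + 2)) := h0l.symm
  have h0mid : ∀ i : Fin n, (0 : Fin (n+2)) ≠ mid i := fun i => (hmid0 i).symm
  have hlmid : ∀ i : Fin n, l ≠ mid i := fun i => (hmidl i).symm
  have hmidinj : ∀ i j : Fin n, mid i = mid j ↔ i = j := by
    intro i j
    constructor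
    · intro h; have := congrArg Fin.val h
      simp [hmid] at this; exact Fin.ext this
    · rintro rfl; rfl
  set e := cornerEquiv n with he
  have he0 : e (Sum.inl 0) = 0 := rfl
  have he1 : e (Sum.inl 1) = l := rfl
  have her : ∀ i : Fin n, e (Sum.inr i) = mid i := fun i => rfl
  set B : Matrix (Fin (n + 2)) (Fin (n + 2)) R := fun i j =>
    if j = 0 then adjugate M i 0 else if j = l then adjugate M i l
    else if i = j then 1 else 0 with hB
  -- determinant of B
  have hBsub : B.submatrix e e =
      fromBlocks !![adjugate M 0 0, adjugate M 0 l; adjugate M l 0, adjugate M l l] 0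
        (fun i a => adjugate M (mid i) (![0, l] a)) 1 := by
    ext (a | i) (b | j) <;> rw [submatrix_apply]
    · fin_cases a <;> fin_cases b <;>
        simp [hB, he0, he1, fromBlocks, h0l, hl0, hmid0, hmidl, h0mid, hlmid, Matrix.one_apply, Matrix.smul_apply]
    · fin_cases a <;>
        simp [hB, he0, he1, her, fromBlocks, h0l, hl0, hmid0, hmidl, h0mid, hlmid, Matrix.one_apply, Matrix.smul_apply]
    · fin_cases b <;>
        simp [hB, he0, he1, her, fromBlocks, h0l, hl0, hmid0, hmidl, h0mid, hlmid, Matrix.one_apply, Matrix.smul_apply]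
    · simp [hB, he0, he1, her, fromBlocks, h0l, hl0, hmid0, hmidl, h0mid, hlmid, hmidinj,
        Matrix.one_apply, Matrix.smul_apply]
  have hdetB : B.det =
      (M.submatrix Fin.succ Fin.succ).det *
          (M.submatrix Fin.castSucc Fin.castSucc).det -
        (M.submatrix Fin.succ Fin.castSucc).det *
          (M.submatrix Fin.castSucc Fin.succ).det := by
    have h1 := det_submatrix_equiv_self e B
    rw [hBsub] at h1
    rw [← h1]; erw [det_fromBlocks_zero₁₂]; rw [det_one, mul_one, det_fin_two_of]
    have a00 : adjugate M 0 0 = (M.submatrix Fin.succ Fin.succ).det := by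
      rw [adjugate_fin_succ_eq_det_submatrix]
      simp [Fin.succAbove_zero]
    have all : adjugate M l l = (M.submatrix Fin.castSucc Fin.castSucc).det := by
      rw [adjugate_fin_succ_eq_det_submatrix]
      simp [hl, Fin.succAbove_last]
    have a0l : adjugate M 0 l = (-1) ^ (n + 1) * (M.submatrix Fin.castSucc Fin.succ).det := by
      rw [adjugate_fin_succ_eq_det_submatrix]
      simp [hl, Fin.succAbove_last, Fin.succAbove_zero]
    have al0 : adjugate M l 0 = (-1) ^ (n + 1) * (M.submatrix Fin.succ Fin.castSucc).det := by
      rw [adjugate_fin_succ_eq_det_submatrix]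
      simp [hl, Fin.succAbove_last, Fin.succAbove_zero]
    have hsq : ((-1 : R) ^ (n + 1)) * ((-1 : R) ^ (n + 1)) = 1 := by
      rw [← pow_add, ← two_mul, pow_mul]; norm_num
    rw [a00, all, a0l, al0]
    linear_combination
      (-((M.submatrix Fin.castSucc Fin.succ).det * (M.submatrix Fin.succ Fin.castSucc).det)) * hsq
  -- determinant of M * B
  have hcol : ∀ r c, (M * B) r c =
      if c = 0 then (M.det • (1 : Matrix (Fin (n + 2)) (Fin (n + 2)) R)) r 0
      else if c = l then (M.det • (1 : Matrix (Fin (n + 2)) (Fin (n + 2)) R)) r l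
      else M r c := by
    intro r c
    rw [mul_apply]
    split_ifs with h1 h2
    · subst h1
      rw [← mul_adjugate, mul_apply]
      simp [hB]
    · subst h2
      rw [← mul_adjugate, mul_apply]
      simp [hB, h1]
    · simp [hB, h1, h2, mul_ite]
  have hMBsub : (M * B).submatrix e e =
      fromBlocks (M.det • (1 : Matrix (Fin 2) (Fin 2) R))
        (fun a j => M (![0, l] a) (mid j)) 0 (M.submatrix mid mid) := by
    ext (a | i) (b | j)
    · fin_cases a <;> fin_cases b <;>
        simp [hcol, he0, he1, fromBlocks, h0l, hl0, hmid0, hmidl, h0mid, hlmid, Matrix.one_apply, Matrix.smul_apply]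
    · fin_cases a <;>
        simp [hcol, he0, he1, her, fromBlocks, h0l, hl0, hmid0, hmidl, h0mid, hlmid, Matrix.one_apply, Matrix.smul_apply]
    · fin_cases b <;>
        simp [hcol, he0, he1, her, fromBlocks, h0l, hl0, hmid0, hmidl, h0mid, hlmid, Matrix.one_apply, Matrix.smul_apply]
    · simp [hcol, he0, he1, her, fromBlocks, h0l, hl0, hmid0, hmidl, h0mid, hlmid, Matrix.one_apply, Matrix.smul_apply]
  have hdetMB : (M * B).det = M.det ^ 2 * (M.submatrix mid mid).det := by
    have h1 := det_submatrix_equiv_self e (M * B)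
    rw [hMBsub] at h1
    rw [← h1]; erw [det_fromBlocks_zero₂₁]; rw [det_smul, det_one, mul_one]
    norm_num
  calc M.det * _ = M.det * B.det := by rw [hdetB]
    _ = (M * B).det := (det_mul M B).symm
    _ = M.det ^ 2 * (M.submatrix mid mid).det := hdetMB
    _ = M.det * (M.det * (M.submatrix mid mid).det) := by ring

/-- Desnanot–Jacobi (Dodgson condensation): for an `(n+2) × (n+2)` matrix `M`
over a commutative ring,
`det M · det(inner) = det(M₀₀) · det(Mₗₗ) − det(M₀ₗ) · det(Mₗ₀)`,
where `inner` removes the first and last rows and columns, `M₀₀` removes the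
first row and column, `Mₗₗ` the last row and column, `M₀ₗ` the first row and
last column, `Mₗ₀` the last row and first column. -/
theorem desnanot_jacobi {R : Type*} [CommRing R] {n : ℕ}
    (M : Matrix (Fin (n + 2)) (Fin (n + 2)) R) :
    M.det *
        (M.submatrix (fun i : Fin n => (i.succ : Fin (n + 1)).castSucc)
          (fun j : Fin n => (j.succ : Fin (n + 1)).castSucc)).det =
      (M.submatrix Fin.succ Fin.succ).det *
          (M.submatrix Fin.castSucc Fin.castSucc).det -
        (M.submatrix Fin.succ Fin.castSucc).det *
          (M.submatrix Fin.castSucc Fin.succ).det := by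
  -- first prove it for the generic matrix over a polynomial ring, by cancellation
  have generic : ∀ m : ℕ, ∀ X : Matrix (Fin (m + 2)) (Fin (m + 2))
      (MvPolynomial (Fin (m + 2) × Fin (m + 2)) ℤ),
      X = mvPolynomialX (Fin (m + 2)) (Fin (m + 2)) ℤ →
      X.det *
        (X.submatrix (fun i : Fin m => (i.succ : Fin (m + 1)).castSucc)
          (fun j : Fin m => (j.succ : Fin (m + 1)).castSucc)).det =
      (X.submatrix Fin.succ Fin.succ).det *
          (X.submatrix Fin.castSucc Fin.castSucc).det -
        (X.submatrix Fin.succ Fin.castSucc).det *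
          (X.submatrix Fin.castSucc Fin.succ).det := by
    intro m X hX
    have hd : X.det ≠ 0 := by rw [hX]; exact det_mvPolynomialX_ne_zero _ _
    have := dj_key X
    exact mul_left_cancel₀ hd this.symm
  -- now specialize
  set f : MvPolynomial (Fin (n + 2) × Fin (n + 2)) ℤ →+* R :=
    MvPolynomial.eval₂Hom (Int.castRingHom R) fun p => M p.1 p.2 with hf
  have hM : (mvPolynomialX (Fin (n + 2)) (Fin (n + 2)) ℤ).map f = M := by
    exact mvPolynomialX_map_eval₂ (Int.castRingHom R) M
  have h := generic n _ rfl
  have h2 := congrArg f h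
  simp only [_root_.map_mul, map_sub, RingHom.map_det, RingHom.mapMatrix_apply,
    ← Matrix.submatrix_map, hM] at h2
  exact h2
end
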